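/- Let ℓ = n − m + 1 and let σ_r, for r = 1,…,ℓ, be the complex n × m matrices which are zero except in row (m−1+r), where the entries in columns 1 and 2 are i and 1 respectively. Then {σ_1,…,σ_ℓ} is a linearly independent family in Mat_{n×m}(ℂ), and the complex span of {σ_r} has dimension ℓ; moreover, for the rank-(m−1) matrix A₀ whose only nonzero entries are A₀(1,1) = 1, A₀(1,2) = i, and A₀(j, j+1) = 1 for j = 2,…,m−1, the span of {σ_r} intersects the tangent space at A₀ of the manifold of rank-(m−1) matrices trivially, i.e., Mat_{n×m}(ℂ) = T_{A₀}Mat^1_{n×m}(ℂ) ⊕ span_ℂ{σ_1,…,σ_ℓ}. -/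

import Mathlib

/-- The matrices `σ_r` (`r = 1,…,ℓ = n−m+1`): zero except in row `m−1+r`
(`0`-based rows `m−1, …, n−1`), where the entries in columns `1` and `2` are
`i` and `1` respectively. -/
noncomputable def sigmaMat (n m : ℕ) (r : Fin (n - m + 1)) : Matrix (Fin n) (Fin m) ℂ :=
  Matrix.of fun i j =>
    if i.val = m - 1 + r.val ∧ j.val = 0 then Complex.I
    else if i.val = m - 1 + r.val ∧ j.val = 1 then 1
    else 0

/-- The rank-`(m−1)` matrix `A₀` with `A₀(1,1) = 1`, `A₀(1,2) = i`, and
`A₀(j, j+1) = 1` for `j = 2,…,m−1` (`0`-based: `A₀ 0 0 = 1`, `A₀ 0 1 = i`,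
`A₀ j (j+1) = 1` for `1 ≤ j ≤ m−2`), all other entries zero. -/
noncomputable def A0Mat (n m : ℕ) : Matrix (Fin n) (Fin m) ℂ :=
  Matrix.of fun i j =>
    if i.val = 0 ∧ j.val = 0 then 1
    else if i.val = 0 ∧ j.val = 1 then Complex.I
    else if 1 ≤ i.val ∧ i.val ≤ m - 2 ∧ j.val = i.val + 1 then 1
    else 0

/-- A distinguished generator of the kernel of `A₀`. -/
noncomputable def uVec (m : ℕ) : Fin m → ℂ := fun k =>
  if k.val = 0 then -Complex.I else if k.val = 1 then 1 else 0

section Helpers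

variable {n m : ℕ}

lemma two_term_sum (hm : 2 ≤ m) (a b : ℂ) (v : Fin m → ℂ) :
    ∑ j : Fin m, (if j.val = 0 then a else if j.val = 1 then b else 0) * v j
      = a * v ⟨0, by omega⟩ + b * v ⟨1, by omega⟩ := by
  have key : ∀ j : Fin m, (if j.val = 0 then a else if j.val = 1 then b else 0) * v j
      = (if j = (⟨0, by omega⟩ : Fin m) then a * v j else 0)
        + (if j = (⟨1, by omega⟩ : Fin m) then b * v j else 0) := by
    intro j
    by_cases h0 : j.val = 0
    · simp [Fin.ext_iff, h0]
    · by_cases h1 : j.val = 1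
      · simp [Fin.ext_iff, h0, h1]
      · simp [Fin.ext_iff, h0, h1]
  rw [Finset.sum_congr rfl fun j _ => key j, Finset.sum_add_distrib,
    Finset.sum_ite_eq' Finset.univ, Finset.sum_ite_eq' Finset.univ]
  simp

lemma one_term_sum (k : ℕ) (hk : k < m) (v : Fin m → ℂ) :
    ∑ j : Fin m, (if j.val = k then (1:ℂ) else 0) * v j = v ⟨k, hk⟩ := by
  have key : ∀ j : Fin m, (if j.val = k then (1:ℂ) else 0) * v j
      = if j = (⟨k, hk⟩ : Fin m) then v j else 0 := by
    intro j
    by_cases h : j.val = k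
    · simp [Fin.ext_iff, h]
    · simp [Fin.ext_iff, h]
  rw [Finset.sum_congr rfl fun j _ => key j, Finset.sum_ite_eq' Finset.univ]
  simp

lemma A0_mulVec_row0 (hm : 2 ≤ m) (v : Fin m → ℂ) (i : Fin n) (hi : i.val = 0) :
    (A0Mat n m).mulVec v i = v ⟨0, by omega⟩ + Complex.I * v ⟨1, by omega⟩ := by
  simp only [Matrix.mulVec, dotProduct, A0Mat, Matrix.of_apply]
  have key : ∀ j : Fin m,
      (if i.val = 0 ∧ j.val = 0 then (1:ℂ)
        else if i.val = 0 ∧ j.val = 1 then Complex.I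
        else if 1 ≤ i.val ∧ i.val ≤ m - 2 ∧ j.val = i.val + 1 then 1 else 0) * v j
      = (if j.val = 0 then (1:ℂ) else if j.val = 1 then Complex.I else 0) * v j := by
    intro j
    have : ¬ (1 ≤ i.val) := by omega
    simp [hi, this]
  rw [Finset.sum_congr rfl fun j _ => key j, two_term_sum hm]
  ring

lemma A0_mulVec_mid (hm : 2 ≤ m) (v : Fin m → ℂ) (i : Fin n)
    (h1 : 1 ≤ i.val) (h2 : i.val ≤ m - 2) :
    (A0Mat n m).mulVec v i = v ⟨i.val + 1, by omega⟩ := by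
  simp only [Matrix.mulVec, dotProduct, A0Mat, Matrix.of_apply]
  have key : ∀ j : Fin m,
      (if i.val = 0 ∧ j.val = 0 then (1:ℂ)
        else if i.val = 0 ∧ j.val = 1 then Complex.I
        else if 1 ≤ i.val ∧ i.val ≤ m - 2 ∧ j.val = i.val + 1 then 1 else 0) * v j
      = (if j.val = i.val + 1 then (1:ℂ) else 0) * v j := by
    intro j
    have h0 : ¬ (i.val = 0) := by omega
    simp [h0, h1, h2]
  rw [Finset.sum_congr rfl fun j _ => key j, one_term_sum (i.val + 1) (by omega)]

lemma A0_mulVec_ge (hm : 2 ≤ m) (v : Fin m → ℂ) (i : Fin n) (hi : m - 1 ≤ i.val) :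
    (A0Mat n m).mulVec v i = 0 := by
  simp only [Matrix.mulVec, dotProduct, A0Mat, Matrix.of_apply]
  apply Finset.sum_eq_zero
  intro j _
  have h0 : ¬ (i.val = 0) := by omega
  have h2 : ¬ (i.val ≤ m - 2) := by omega
  simp [h0, h2]

lemma sigma_mulVec (hm : 2 ≤ m) (r : Fin (n - m + 1)) (v : Fin m → ℂ) (i : Fin n) :
    (sigmaMat n m r).mulVec v i =
      if i.val = m - 1 + r.val
        then Complex.I * v ⟨0, by omega⟩ + v ⟨1, by omega⟩ else 0 := by
  simp only [Matrix.mulVec, dotProduct, sigmaMat, Matrix.of_apply]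
  by_cases hi : i.val = m - 1 + r.val
  · rw [if_pos hi]
    have key : ∀ j : Fin m,
        (if i.val = m - 1 + r.val ∧ j.val = 0 then Complex.I
          else if i.val = m - 1 + r.val ∧ j.val = 1 then (1:ℂ) else 0) * v j
        = (if j.val = 0 then Complex.I else if j.val = 1 then (1:ℂ) else 0) * v j := by
      intro j; simp [hi]
    rw [Finset.sum_congr rfl fun j _ => key j, two_term_sum hm]
    ring
  · rw [if_neg hi]
    apply Finset.sum_eq_zero
    intro j _
    simp [hi]

lemma A0_mulVec_uVec (hm : 2 ≤ m) (hmn : m ≤ n) :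
    (A0Mat n m).mulVec (uVec m) = 0 := by
  funext i
  rcases Nat.lt_or_ge i.val 1 with h | h
  · rw [A0_mulVec_row0 hm _ i (by omega)]
    simp [uVec]
  · rcases Nat.lt_or_ge i.val (m - 1) with h' | h'
    · rw [A0_mulVec_mid hm _ i (by omega) (by omega)]
      have : ¬ (i.val + 1 = 0) := by omega
      have : ¬ (i.val + 1 = 1) := by omega
      simp_all [uVec]
    · rw [A0_mulVec_ge hm _ i h']
      rfl

lemma A0_ker (hm : 2 ≤ m) (hmn : m ≤ n) (v : Fin m → ℂ)
    (hv : (A0Mat n m).mulVec v = 0) : v = v ⟨1, by omega⟩ • uVec m := by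
  have h0 := congrFun hv ⟨0, by omega⟩
  rw [A0_mulVec_row0 hm v _ rfl] at h0
  simp only [Pi.zero_apply] at h0
  funext k
  simp only [Pi.smul_apply, uVec, smul_eq_mul]
  by_cases hk0 : k.val = 0
  · have hk : k = ⟨0, by omega⟩ := Fin.ext hk0
    rw [if_pos hk0, hk]
    linear_combination h0
  · by_cases hk1 : k.val = 1
    · have hk : k = ⟨1, by omega⟩ := Fin.ext hk1
      rw [hk]
      simp
    · have hkm : k.val < m := k.isLt
      have hmid := congrFun hv ⟨k.val - 1, by omega⟩
      rw [A0_mulVec_mid hm v ⟨k.val - 1, by omega⟩ (show 1 ≤ k.val - 1 by omega)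
        (show k.val - 1 ≤ m - 2 by omega)] at hmid
      simp only [Pi.zero_apply] at hmid
      have hkk : (⟨k.val - 1 + 1, by omega⟩ : Fin m) = k := Fin.ext (by simp; omega)
      rw [hkk] at hmid
      simp [hk0, hk1, hmid]

lemma sum_smul_mulVec {k : ℕ} (c : Fin k → ℂ) (M : Fin k → Matrix (Fin n) (Fin m) ℂ)
    (v : Fin m → ℂ) :
    (∑ r, c r • M r).mulVec v = ∑ r, c r • (M r).mulVec v := by
  funext i
  simp only [Matrix.mulVec, dotProduct, Matrix.sum_apply, Matrix.smul_apply,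
    Finset.sum_apply, Pi.smul_apply, smul_eq_mul, Finset.sum_mul, Finset.mul_sum]
  rw [Finset.sum_comm]
  apply Finset.sum_congr rfl
  intro j _
  apply Finset.sum_congr rfl
  intro r _
  ring

lemma CS_row (hm : 2 ≤ m) (hmn : m ≤ n) (C : Matrix (Fin n) (Fin m) ℂ)
    (d : Fin (n - m + 1) → ℂ) (r : Fin (n - m + 1)) :
    (C - ∑ r', d r' • sigmaMat n m r').mulVec (uVec m) ⟨m - 1 + r.val, by omega⟩
      = C.mulVec (uVec m) ⟨m - 1 + r.val, by omega⟩ - 2 * d r := by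
  rw [Matrix.sub_mulVec, Pi.sub_apply, sum_smul_mulVec]
  congr 1
  rw [Finset.sum_apply]
  have key : ∀ r' : Fin (n - m + 1),
      (d r' • (sigmaMat n m r').mulVec (uVec m)) ⟨m - 1 + r.val, by omega⟩
        = if r' = r then 2 * d r else 0 := by
    intro r'
    rw [Pi.smul_apply, sigma_mulVec hm]
    by_cases h : r' = r
    · subst h
      simp only [smul_eq_mul, uVec]
      norm_num
      ring
    · have hne : ¬ ((⟨m - 1 + r.val, by omega⟩ : Fin n).val = m - 1 + r'.val) := by
        intro h'
        exact h (Fin.ext (by simp at h'; omega))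
      simp [hne, h, Ne.symm h, Fin.val_inj]
  rw [Finset.sum_congr rfl fun r' _ => key r', Finset.sum_ite_eq' Finset.univ]
  simp

end Helpers

/-- The family `σ_1, …, σ_ℓ` is linearly independent, its span has dimension
`ℓ = n − m + 1`, and it is a direct complement to the tangent space at `A₀` of the
manifold of rank-`(m−1)` matrices: every matrix `C` decomposes uniquely as a
combination of the `σ_r` plus a matrix `B` in the tangent space, the latter being
characterized by `B·(ker A₀) ⊆ range A₀`. -/
theorem sigma_complement (n m : ℕ) (hm : 2 ≤ m) (hmn : m ≤ n) :
    LinearIndependent ℂ (sigmaMat n m) ∧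
    Module.finrank ℂ (Submodule.span ℂ (Set.range (sigmaMat n m))) = n - m + 1 ∧
    ∀ C : Matrix (Fin n) (Fin m) ℂ, ∃! c : Fin (n - m + 1) → ℂ,
      ∀ v : Fin m → ℂ, (A0Mat n m).mulVec v = 0 →
        ∃ w : Fin m → ℂ,
          (C - ∑ r, c r • sigmaMat n m r).mulVec v = (A0Mat n m).mulVec w := by
  have hLI : LinearIndependent ℂ (sigmaMat n m) := by
    rw [Fintype.linearIndependent_iff]
    intro g hg r
    have h : (∑ r', g r' • sigmaMat n m r') (⟨m - 1 + r.val, by omega⟩ : Fin n)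
        (⟨0, by omega⟩ : Fin m) = 0 := by rw [hg]; rfl
    rw [Matrix.sum_apply] at h
    have key : ∀ r' : Fin (n - m + 1),
        (g r' • sigmaMat n m r') (⟨m - 1 + r.val, by omega⟩ : Fin n)
          (⟨0, by omega⟩ : Fin m) = if r' = r then g r' * Complex.I else 0 := by
      intro r'
      rw [Matrix.smul_apply, smul_eq_mul]
      by_cases hrr : r' = r
      · subst hrr; simp [sigmaMat]
      · have hne : ¬ (m - 1 + r.val = m - 1 + r'.val) := by
          intro h'
          exact hrr (Fin.ext (by omega))
        simp [sigmaMat, hne, hrr, Ne.symm hrr, Fin.val_inj]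
    rw [Finset.sum_congr rfl fun r' _ => key r', Finset.sum_ite_eq' Finset.univ] at h
    simp only [Finset.mem_univ, if_pos] at h
    have := mul_eq_zero.mp h
    simpa [Complex.I_ne_zero] using this
  refine ⟨hLI, ?_, ?_⟩
  · rw [finrank_span_eq_card hLI, Fintype.card_fin]
  · intro C
    set c : Fin (n - m + 1) → ℂ :=
      fun r => C.mulVec (uVec m) ⟨m - 1 + r.val, by omega⟩ / 2 with hc
    refine ⟨c, ?_, ?_⟩
    · -- existence
      intro v hv
      set t : ℂ := v ⟨1, by omega⟩ with ht
      have hvu : v = t • uVec m := A0_ker hm hmn v hv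
      set x : Fin n → ℂ := (C - ∑ r, c r • sigmaMat n m r).mulVec (uVec m) with hx
      have hxge : ∀ i : Fin n, m - 1 ≤ i.val → x i = 0 := by
        intro i hi
        set r0 : Fin (n - m + 1) := ⟨i.val - (m - 1), by omega⟩ with hr0
        have hiv : i = (⟨m - 1 + r0.val, by omega⟩ : Fin n) := Fin.ext (by simp [hr0]; omega)
        rw [hx, hiv, CS_row hm hmn]
        rw [hc]
        ring
      set w0 : Fin m → ℂ := fun k =>
        if k.val = 0 then x ⟨0, by omega⟩
        else if k.val = 1 then 0 else x ⟨k.val - 1, by omega⟩ with hw0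
      have hA0w0 : (A0Mat n m).mulVec w0 = x := by
        funext i
        rcases Nat.lt_or_ge i.val 1 with h | h
        · have hi0 : i.val = 0 := by omega
          have hieq : i = (⟨0, by omega⟩ : Fin n) := Fin.ext hi0
          rw [hieq, A0_mulVec_row0 hm w0 _ rfl]
          simp [hw0]
        · rcases Nat.lt_or_ge i.val (m - 1) with h' | h'
          · rw [A0_mulVec_mid hm w0 i (by omega) (by omega)]
            have h2 : ¬ ((i.val + 1) = 0) := by omega
            have h3 : ¬ ((i.val + 1) = 1) := by omega
            simp only [hw0, h2, h3, if_false]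
            congr 1
          · rw [A0_mulVec_ge hm w0 i h', hxge i h']
      refine ⟨t • w0, ?_⟩
      rw [hvu, Matrix.mulVec_smul, Matrix.mulVec_smul, hA0w0]
    · -- uniqueness
      intro c' hc'
      obtain ⟨w, hw⟩ := hc' (uVec m) (A0_mulVec_uVec hm hmn)
      funext r
      have h := congrFun hw ⟨m - 1 + r.val, by omega⟩
      rw [CS_row hm hmn, A0_mulVec_ge hm w _ (Nat.le_add_right _ _)] at h
      have hcr : c r = C.mulVec (uVec m) ⟨m - 1 + r.val, by omega⟩ / 2 := rfl
      rw [hcr]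
      linear_combination (-1/2 : ℂ) * h
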